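/- For an integer k ≥ 2 define f_k(λ) = sqrt( (e^λ + k - 2)² + e^{2λ} + k - 2 ) / (e^λ + k - 1) for λ ≥ 0. Then: (i) f_k(λ) ≤ sqrt(2) for all λ ≥ 0; (ii) f_k(λ) tends to sqrt(2) as λ → ∞; and (iii) there exists a constant c > 0 (depending only on k) such that sqrt(2) - f_k(λ) ≤ c · e^{-λ} for all λ ≥ 0, i.e. the convergence is exponentially fast in λ. -/
import Mathlib


/-- The gradient-norm function
`f_k(λ) = √((e^λ + k - 2)² + e^{2λ} + k - 2) / (e^λ + k - 1)`. -/
noncomputable def fGrad (k : ℕ) (lam : ℝ) : ℝ :=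
  Real.sqrt ((Real.exp lam + k - 2) ^ 2 + Real.exp (2 * lam) + k - 2) /
    (Real.exp lam + k - 1)

lemma fGrad_le_sqrt_two (k : ℕ) (hk : 2 ≤ k) (lam : ℝ) (hl : 0 ≤ lam) :
    fGrad k lam ≤ Real.sqrt 2 := by
  have hk2 : (2 : ℝ) ≤ (k : ℝ) := by exact_mod_cast hk
  have ht : 1 ≤ Real.exp lam := Real.one_le_exp hl
  set t := Real.exp lam with htdef
  have he2 : Real.exp (2 * lam) = t ^ 2 := by
    rw [two_mul, Real.exp_add]; ring
  have hD : 0 < t + (k : ℝ) - 1 := by linarith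
  have hN : 0 ≤ (t + (k : ℝ) - 2) ^ 2 + Real.exp (2 * lam) + k - 2 := by
    rw [he2]; nlinarith
  have hND : (t + (k : ℝ) - 2) ^ 2 + Real.exp (2 * lam) + k - 2
      ≤ 2 * (t + (k : ℝ) - 1) ^ 2 := by
    rw [he2]; nlinarith
  have h1 : Real.sqrt ((t + (k : ℝ) - 2) ^ 2 + Real.exp (2 * lam) + k - 2)
      ≤ Real.sqrt 2 * (t + (k : ℝ) - 1) := by
    have := Real.sqrt_le_sqrt hND
    calc Real.sqrt ((t + (k : ℝ) - 2) ^ 2 + Real.exp (2 * lam) + k - 2)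
        ≤ Real.sqrt (2 * (t + (k : ℝ) - 1) ^ 2) := this
      _ = Real.sqrt 2 * (t + (k : ℝ) - 1) := by
          rw [Real.sqrt_mul (by norm_num), Real.sqrt_sq hD.le]
  rw [fGrad, div_le_iff₀ hD]
  exact h1

set_option maxHeartbeats 1000000 in
/-- For `k ≥ 2`: (i) `f_k(λ) ≤ √2` for all `λ ≥ 0`; (ii) `f_k(λ) → √2`
as `λ → ∞`; (iii) the convergence is exponentially fast: there exists `c > 0` (depending
only on `k`) with `√2 - f_k(λ) ≤ c e^{-λ}` for all `λ ≥ 0`. -/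
theorem fGrad_le_sqrt_two_and_tendsto_exponentially (k : ℕ) (hk : 2 ≤ k) :
    (∀ lam ≥ (0 : ℝ), fGrad k lam ≤ Real.sqrt 2) ∧
    Filter.Tendsto (fGrad k) Filter.atTop (nhds (Real.sqrt 2)) ∧
    ∃ c > (0 : ℝ), ∀ lam ≥ (0 : ℝ),
      Real.sqrt 2 - fGrad k lam ≤ c * Real.exp (-lam) := by
  have hk2 : (2 : ℝ) ≤ (k : ℝ) := by exact_mod_cast hk
  set c : ℝ := (k : ℝ) ^ 2 + k with hcdef
  have hc : 0 < c := by positivity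
  have hupper := fun lam hl => fGrad_le_sqrt_two k hk lam hl
  have hmain : ∀ lam ≥ (0 : ℝ),
      Real.sqrt 2 - fGrad k lam ≤ c * Real.exp (-lam) := by
    intro lam hl
    have ht : 1 ≤ Real.exp lam := Real.one_le_exp hl
    set t := Real.exp lam with htdef
    have ht0 : 0 < t := lt_of_lt_of_le one_pos ht
    have he2 : Real.exp (2 * lam) = t ^ 2 := by
      rw [two_mul, Real.exp_add]; ring
    have hD : 0 < t + (k : ℝ) - 1 := by linarith
    set D := t + (k : ℝ) - 1 with hDdef
    set N := (t + (k : ℝ) - 2) ^ 2 + Real.exp (2 * lam) + k - 2 with hNdef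
    have hN : 0 ≤ N := by rw [hNdef, he2]; nlinarith
    set S := Real.sqrt N with hSdef
    have hS0 : 0 ≤ S := Real.sqrt_nonneg _
    have hSsq : S ^ 2 = N := Real.sq_sqrt hN
    set s := Real.sqrt 2 with hsdef
    have hssq : s ^ 2 = 2 := Real.sq_sqrt (by norm_num)
    have hs1 : 1 ≤ s := by
      rw [hsdef]; nlinarith [Real.sq_sqrt (show (0:ℝ) ≤ 2 by norm_num),
        Real.sqrt_nonneg 2]
    have hSsD : S ≤ s * D := by
      have := fGrad_le_sqrt_two k hk lam hl
      rw [fGrad, div_le_iff₀ hD] at this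
      exact this
    -- key polynomial bound: (2 D^2 - N) * t ≤ c * t^2
    have hct : 2 * D ^ 2 - N ≤ c * t := by
      have hkk : (0:ℝ) ≤ (k:ℝ)^2 - k := by nlinarith
      rw [hNdef, hDdef, he2, hcdef]
      nlinarith [mul_nonneg hkk (sub_nonneg.mpr ht)]
    have hfg : fGrad k lam = S / D := rfl
    rw [hfg, Real.exp_neg, ← htdef]
    -- step 1 : N / (s * D^2) ≤ S / D
    have h1 : N / (s * D ^ 2) ≤ S / D := by
      rw [div_le_div_iff₀ (by positivity) hD]
      -- N * D ≤ S * (s * D^2)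
      nlinarith [mul_le_mul_of_nonneg_left hSsD hS0, sq_nonneg (S - D)]
    -- step 2 : s - N / (s * D^2) ≤ c * t⁻¹
    have h2 : s - N / (s * D ^ 2) ≤ c * t⁻¹ := by
      have hs0 : 0 < s := lt_of_lt_of_le one_pos hs1
      rw [sub_le_iff_le_add]
      have heq : c * t⁻¹ + N / (s * D ^ 2)
          = (c * (s * D ^ 2) + N * t) / (t * (s * D ^ 2)) := by
        field_simp
      rw [heq, le_div_iff₀ (by positivity)]
      have htD : t ≤ D := by rw [hDdef]; linarith
      have htD2 : t ^ 2 ≤ D ^ 2 := pow_le_pow_left₀ ht0.le htD 2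
      have hct' := mul_le_mul_of_nonneg_right hct ht0.le
      have hss : s * s = 2 := by nlinarith [hssq]
      calc s * (t * (s * D ^ 2)) = (s * s) * (t * D ^ 2) := by ring
        _ = 2 * (t * D ^ 2) := by rw [hss]
        _ ≤ c * (s * D ^ 2) + N * t := by
            have hcd : c * D ^ 2 ≤ c * (s * D ^ 2) :=
              mul_le_mul_of_nonneg_left (le_mul_of_one_le_left (sq_nonneg D) hs1) hc.le
            have hcd2 : c * t ^ 2 ≤ c * D ^ 2 :=
              mul_le_mul_of_nonneg_left htD2 hc.le
            nlinarith [hct', hcd, hcd2]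
    linarith
  refine ⟨hupper, ?_, c, hc, hmain⟩
  · -- squeeze
    have hlow : Filter.Tendsto (fun lam => Real.sqrt 2 - c * Real.exp (-lam))
        Filter.atTop (nhds (Real.sqrt 2)) := by
      have h0 : Filter.Tendsto (fun lam : ℝ => Real.exp (-lam)) Filter.atTop (nhds 0) := by
        exact Real.tendsto_exp_neg_atTop_nhds_zero
      have := (tendsto_const_nhds (x := Real.sqrt 2) (f := Filter.atTop (α := ℝ))).sub
        (h0.const_mul c)
      simpa using this
    refine tendsto_of_tendsto_of_tendsto_of_le_of_le' hlow tendsto_const_nhds ?_ ?_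
    · filter_upwards [Filter.eventually_ge_atTop (0 : ℝ)] with lam hl
      linarith [hmain lam hl]
    · filter_upwards [Filter.eventually_ge_atTop (0 : ℝ)] with lam hl
      exact hupper lam hl
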